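/- arXiv:1710.10044 — 2 statements merged into one kernel-verified Lean document; each statement's English description precedes it below -/
import Mathlib

section
/- Let μ be a probability measure on ℝ with finite first moment, F its CDF and F⁻¹ its quantile function, and let 0 ≤ τ < τ' ≤ 1 with m = (τ + τ')/2 ∈ (0,1). If F⁻¹ is continuous at m, then θ* = F⁻¹(m) is the unique minimizer over θ ∈ ℝ of g(θ) = ∫_τ^{τ'} |F⁻¹(ω) − θ| dω. -/
/-!
On `(0, 1)` the quantile function `q = F⁻¹` is monotone and satisfies `q ω ≤ x ↔ ω ≤ F x`, so it
pushes Lebesgue measure on `(0, 1)` forward to `μ`; a finite first moment thus makes `q`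
integrable. Let `m` be the midpoint of `[τ, τ']` and `θ = q m + d` with `d > 0`. Compared with
`|q - q m|`, the integrand `|q - θ|` is larger by `d` on `(τ, m)`, where `q ≤ q m`, larger by at
least `d / 2` on a short interval to the right of `m`, where `q` is close to `q m` by continuity,
and smaller by at most `d` everywhere else. As `(τ, m)` is half of `(τ, τ')`, `θ` does strictly
worse than `q m`; for `d < 0` the same argument applies to `-q`, with the halves exchanged.
-/

open MeasureTheory Set

/-- The CDF of a measure on ℝ: `F(y) = μ((-∞, y])`. -/
noncomputable def cdfFn (μ : Measure ℝ) (y : ℝ) : ℝ := (μ (Iic y)).toReal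

/-- The quantile function (generalized inverse CDF): `F⁻¹(ω) = inf {y | ω ≤ F(y)}`. -/
noncomputable def quantileFn (μ : Measure ℝ) (ω : ℝ) : ℝ := sInf {y : ℝ | ω ≤ cdfFn μ y}

open ProbabilityTheory Filter Topology

theorem integral_abs_sub_lt_integral_abs_sub_add {α : Type*} [MeasurableSpace α] {ν : Measure α}
    [IsFiniteMeasure ν] {f : α → ℝ} (hf : Integrable f ν) {θ d : ℝ} (hd : 0 < d) {s t : Set α}
    (hs : MeasurableSet s) (ht : MeasurableSet t) (hst : Disjoint s t)
    (hfs : ∀ x ∈ s, f x ≤ θ) (hft : ∀ x ∈ t, f x ≤ θ + d / 4)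
    (hs_half : ν.real univ ≤ 2 * ν.real s) (ht_pos : 0 < ν.real t) :
    ∫ x, |f x - θ| ∂ν < ∫ x, |f x - (θ + d)| ∂ν := by
  have hint (c : ℝ) : Integrable (fun x => |f x - c|) ν := (hf.sub (integrable_const c)).abs
  set g : α → ℝ := fun x => -d + s.indicator (fun _ => 2 * d) x + t.indicator (fun _ => 3 * d / 2) x
  have hg_int : Integrable g ν :=
    ((integrable_const _).add ((integrable_const _).indicator hs)).add
      ((integrable_const _).indicator ht)
  have hg_le (x : α) : g x ≤ |f x - (θ + d)| - |f x - θ| := by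
    simp only [g]
    by_cases hxs : x ∈ s
    · have hfx := hfs x hxs
      rw [indicator_of_mem hxs, indicator_of_notMem (hst.notMem_of_mem_left hxs),
        abs_of_nonpos (by linarith), abs_of_nonpos (by linarith)]
      linarith
    by_cases hxt : x ∈ t
    · have hfx := hft x hxt
      rw [indicator_of_notMem hxs, indicator_of_mem hxt, abs_of_nonpos (by linarith)]
      cases abs_cases (f x - θ) <;> linarith
    · have := abs_sub_abs_le_abs_sub (f x - θ) (f x - (θ + d))
      rw [show f x - θ - (f x - (θ + d)) = d by ring, abs_of_pos hd] at this
      rw [indicator_of_notMem hxs, indicator_of_notMem hxt]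
      linarith
  have hg : ∫ x, g x ∂ν = -d * ν.real univ + 2 * d * ν.real s + 3 * d / 2 * ν.real t := by
    simp only [g]
    rw [integral_add ((integrable_const _).add ((integrable_const _).indicator hs))
      ((integrable_const _).indicator ht), integral_add (integrable_const _)
      ((integrable_const _).indicator hs), integral_const, integral_indicator_const _ hs,
      integral_indicator_const _ ht]
    simp only [smul_eq_mul]
    ring
  have hmono := integral_mono hg_int ((hint _).sub (hint _)) hg_le
  simp only [Pi.sub_apply] at hmono
  rw [hg, integral_sub (hint _) (hint _)] at hmono
  nlinarith

lemma measureReal_restrict_Ioc_Ioo {a b p q : ℝ} (hap : a ≤ p) (hpq : p ≤ q) (hqb : q ≤ b) :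
    (volume.restrict (Ioc a b)).real (Ioo p q) = q - p := by
  rw [measureReal_restrict_apply measurableSet_Ioo,
    inter_eq_left.2 (Ioo_subset_Ioc_self.trans (Ioc_subset_Ioc hap hqb)),
    Real.volume_real_Ioo_of_le hpq]

theorem integral_abs_sub_midpoint_lt {f : ℝ → ℝ} {a b θ : ℝ} (hab : a < b)
    (hf : IntervalIntegrable f volume a b) (hmono : MonotoneOn f (Ioo a b))
    (hcont : ContinuousAt f ((a + b) / 2)) (hθ : θ ≠ f ((a + b) / 2)) :
    ∫ x in a..b, |f x - f ((a + b) / 2)| < ∫ x in a..b, |f x - θ| := by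
  set m := (a + b) / 2 with hm
  have ham : a < m := by linarith
  have hmb : m < b := by linarith
  have huniv : (volume.restrict (Ioc a b)).real univ = b - a := by
    rw [measureReal_restrict_apply_univ, Real.volume_real_Ioc_of_le hab.le]
  rw [intervalIntegrable_iff_integrableOn_Ioc_of_le hab.le] at hf
  rw [intervalIntegral.integral_of_le hab.le, intervalIntegral.integral_of_le hab.le]
  rcases hθ.lt_or_gt with hlt | hgt
  · obtain ⟨l, u, ⟨hl, hu⟩, hnear⟩ := mem_nhds_iff_exists_Ioo_subset.1 <|
      hcont.preimage_mem_nhds <| Ici_mem_nhds (show f m - (f m - θ) / 4 < f m by linarith)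
    have key := integral_abs_sub_lt_integral_abs_sub_add hf.neg (sub_pos.2 hlt)
      (s := Ioo m b) (t := Ioo (max l a) m) measurableSet_Ioo measurableSet_Ioo
      (disjoint_left.2 fun x h₁ h₂ => h₁.1.not_gt h₂.2)
      (fun x hx => neg_le_neg (hmono ⟨ham, hmb⟩ ⟨ham.trans hx.1, hx.2⟩ hx.1.le))
      (fun x hx => by
        have := hnear ⟨(le_max_left _ _).trans_lt hx.1, hx.2.trans hu⟩
        simp only [Pi.neg_apply, mem_preimage, mem_Ici] at this ⊢
        linarith)
      (by rw [huniv, measureReal_restrict_Ioc_Ioo ham.le hmb.le le_rfl]; linarith)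
      (by rw [measureReal_restrict_Ioc_Ioo (le_max_right _ _) (max_le hl.le ham.le) hmb.le]
          simp [hl, ham])
    rw [show -f m + (f m - θ) = -θ by ring] at key
    simpa only [Pi.neg_apply, neg_sub_neg, abs_sub_comm] using key
  · obtain ⟨l, u, ⟨hl, hu⟩, hnear⟩ := mem_nhds_iff_exists_Ioo_subset.1 <|
      hcont.preimage_mem_nhds <| Iic_mem_nhds (show f m < f m + (θ - f m) / 4 by linarith)
    have key := integral_abs_sub_lt_integral_abs_sub_add hf (sub_pos.2 hgt)
      (s := Ioo a m) (t := Ioo m (min u b)) measurableSet_Ioo measurableSet_Ioo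
      (disjoint_left.2 fun x h₁ h₂ => h₁.2.not_gt h₂.1)
      (fun x hx => hmono ⟨hx.1, hx.2.trans hmb⟩ ⟨ham, hmb⟩ hx.2.le)
      (fun x hx => hnear ⟨hl.trans hx.1, hx.2.trans_le (min_le_left _ _)⟩)
      (by rw [huniv, measureReal_restrict_Ioc_Ioo le_rfl ham.le hmb.le]; linarith)
      (by rw [measureReal_restrict_Ioc_Ioo ham.le (le_min hu.le hmb.le) (min_le_right _ _)]
          simp [hu, hmb])
    rwa [add_sub_cancel] at key

section Quantile

variable {μ : Measure ℝ}

lemma bddBelow_setOf_le_cdf {ω : ℝ} (hω : 0 < ω) : BddBelow {y | ω ≤ cdf μ y} := by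
  obtain ⟨y₀, hy₀⟩ := ((tendsto_cdf_atBot (μ := μ)).eventually_lt_const hω).exists
  exact ⟨y₀, fun y hy => le_of_not_gt fun hy' => (hy.trans (monotone_cdf μ hy'.le)).not_gt hy₀⟩

lemma nonempty_setOf_le_cdf {ω : ℝ} (hω : ω < 1) : {y | ω ≤ cdf μ y}.Nonempty :=
  let ⟨y, hy⟩ := ((tendsto_cdf_atTop (μ := μ)).eventually_const_lt hω).exists
  ⟨y, hy.le⟩

variable [IsProbabilityMeasure μ]

lemma cdfFn_eq_cdf : cdfFn μ = cdf μ := funext fun x => (cdf_eq_real μ x).symm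

lemma quantileFn_le_iff {ω x : ℝ} (hω : ω ∈ Ioo 0 1) : quantileFn μ ω ≤ x ↔ ω ≤ cdf μ x := by
  rw [quantileFn, cdfFn_eq_cdf]
  refine ⟨fun h => le_trans ?_ (monotone_cdf μ h),
    fun h => csInf_le (bddBelow_setOf_le_cdf hω.1) h⟩
  refine ge_of_tendsto (((cdf μ).right_continuous _).mono Ioi_subset_Ici_self)
    (eventually_nhdsWithin_of_forall fun y hy => ?_)
  obtain ⟨z, hz, hzy⟩ := exists_lt_of_csInf_lt (nonempty_setOf_le_cdf hω.2) hy
  exact hz.trans (monotone_cdf μ hzy.le)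

lemma monotoneOn_quantileFn : MonotoneOn (quantileFn μ) (Ioo 0 1) := fun _ ha _ hb hab =>
  (quantileFn_le_iff ha).2 (hab.trans ((quantileFn_le_iff hb).1 le_rfl))

lemma aemeasurable_quantileFn : AEMeasurable (quantileFn μ) (volume.restrict (Ioo 0 1)) :=
  aemeasurable_restrict_of_monotoneOn measurableSet_Ioo monotoneOn_quantileFn

lemma map_quantileFn : (volume.restrict (Ioo 0 1)).map (quantileFn μ) = μ := by
  have : IsProbabilityMeasure (volume.restrict (Ioo (0 : ℝ) 1)) := ⟨by simp⟩
  have := Measure.isProbabilityMeasure_map (aemeasurable_quantileFn (μ := μ))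
  refine Measure.ext_of_Iic _ _ fun x => ?_
  have hpre : quantileFn μ ⁻¹' Iic x ∩ Ioo 0 1 = Ioo 0 1 ∩ Iic (cdf μ x) := by
    ext ω
    simp only [mem_inter_iff, mem_preimage, mem_Iic]
    exact ⟨fun h => ⟨h.2, (quantileFn_le_iff h.2).1 h.1⟩,
      fun h => ⟨(quantileFn_le_iff h.1).2 h.2, h.1⟩⟩
  rw [Measure.map_apply_of_aemeasurable aemeasurable_quantileFn measurableSet_Iic,
    Measure.restrict_apply' measurableSet_Ioo, ← ofReal_cdf, hpre,
    measure_congr ((ae_eq_refl _).inter Iio_ae_eq_Iic.symm), Ioo_inter_Iio,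
    min_eq_right (cdf_le_one μ x), Real.volume_Ioo, sub_zero]

lemma integrableOn_quantileFn (hμ : Integrable id μ) :
    IntegrableOn (quantileFn μ) (Ioo 0 1) := by
  rw [← map_quantileFn (μ := μ)] at hμ
  exact (integrable_map_measure aestronglyMeasurable_id aemeasurable_quantileFn).1 hμ

end Quantile

theorem quantile_midpoint_unique_minimizer_general
    (μ : Measure ℝ) [IsProbabilityMeasure μ] (hint : Integrable (fun x : ℝ => x) μ)
    (τ τ' : ℝ) (hτ : 0 ≤ τ) (hττ' : τ < τ') (hτ' : τ' ≤ 1)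
    (m : ℝ) (hm : m = (τ + τ') / 2)
    (hcont : ContinuousAt (quantileFn μ) m) :
    (∀ θ : ℝ,
      (∫ ω in τ..τ', |quantileFn μ ω - quantileFn μ m|) ≤ ∫ ω in τ..τ', |quantileFn μ ω - θ|) ∧
    (∀ θ : ℝ,
      (∀ θ' : ℝ,
        (∫ ω in τ..τ', |quantileFn μ ω - θ|) ≤ ∫ ω in τ..τ', |quantileFn μ ω - θ'|) →
      θ = quantileFn μ m) := by
  subst hm
  have hsub : Ioo τ τ' ⊆ Ioo 0 1 := Ioo_subset_Ioo hτ hτ'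
  have hint' : IntervalIntegrable (quantileFn μ) volume τ τ' :=
    (intervalIntegrable_iff_integrableOn_Ioo_of_le hττ'.le).2
      ((integrableOn_quantileFn hint).mono_set hsub)
  have hlt (θ : ℝ) (hθ : θ ≠ quantileFn μ ((τ + τ') / 2)) :=
    integral_abs_sub_midpoint_lt hττ' hint' (monotoneOn_quantileFn.mono hsub) hcont hθ
  refine ⟨fun θ => ?_, fun θ hθ => by_contra fun hne => (hθ _).not_gt (hlt θ hne)⟩
  rcases eq_or_ne θ (quantileFn μ ((τ + τ') / 2)) with rfl | hne
  exacts [le_rfl, (hlt θ hne).le]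

/-- if `F⁻¹` is continuous at `m = (τ+τ')/2 ∈ (0,1)`, then `F⁻¹(m)` is the unique
minimizer of `g(θ) = ∫_τ^{τ'} |F⁻¹(ω) - θ| dω`. -/
theorem quantile_midpoint_unique_minimizer
    (μ : Measure ℝ) [IsProbabilityMeasure μ] (hint : Integrable (fun x : ℝ => x) μ)
    (τ τ' : ℝ) (hτ : 0 ≤ τ) (hττ' : τ < τ') (hτ' : τ' ≤ 1)
    (m : ℝ) (hm : m = (τ + τ') / 2) (hm' : m ∈ Set.Ioo (0 : ℝ) 1)
    (hcont : ContinuousAt (quantileFn μ) m) :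
    (∀ θ : ℝ,
      (∫ ω in τ..τ', |quantileFn μ ω - quantileFn μ m|) ≤ ∫ ω in τ..τ', |quantileFn μ ω - θ|) ∧
    (∀ θ : ℝ,
      (∀ θ' : ℝ,
        (∫ ω in τ..τ', |quantileFn μ ω - θ|) ≤ ∫ ω in τ..τ', |quantileFn μ ω - θ'|) →
      θ = quantileFn μ m) :=
  quantile_midpoint_unique_minimizer_general μ hint τ τ' hτ hττ' hτ' m hm hcont
end

section
/- There exist p ∈ [1, ∞), m ≥ 1, and b ∈ (0,1) with the following property. Let B be the Bernoulli distribution on ℝ with B({1}) = b and B({0}) = 1 − b, and for μ ∈ [0,1] let B_μ be the Bernoulli distribution with B_μ({1}) = μ. Let Ŷ_m = (1/m) ∑_{k=1}^m δ_{Y_k} be the empirical measure of m i.i.d. samples Y_1, …, Y_m from B. Then the set of minimizers over μ ∈ [0,1] of μ ↦ E[W_p(Ŷ_m, B_μ)] is different from the set of minimizers over μ ∈ [0,1] of μ ↦ W_p(B, B_μ) (the latter being {b}). -/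
open MeasureTheory Set
open scoped ENNReal

/-- The empirical measure of samples `Y : Fin m → ℝ`, i.e. `(1/m) ∑ₖ δ_{Yₖ}`. -/
noncomputable def empiricalMeasure {m : ℕ} (Y : Fin m → ℝ) : Measure ℝ :=
  (m : ℝ≥0∞)⁻¹ • ∑ k : Fin m, Measure.dirac (Y k)

/-- The p-Wasserstein distance `W_p(μ, ν) = (∫_0^1 |F_μ⁻¹(ω) - F_ν⁻¹(ω)|^p dω)^{1/p}`. -/
noncomputable def Wp (p : ℝ) (μ ν : Measure ℝ) : ℝ :=
  (∫ ω in (0:ℝ)..1, |quantileFn μ ω - quantileFn ν ω| ^ p) ^ (1 / p)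

/-- The Bernoulli distribution on ℝ with mass `μ` at `1` and `1 - μ` at `0`. -/
noncomputable def bern (μ : ℝ) : Measure ℝ :=
  ENNReal.ofReal (1 - μ) • Measure.dirac 0 + ENNReal.ofReal μ • Measure.dirac 1

/-!
Take `p = 1`, `m = 1`. The quantile functions of `B_b` and `B_μ` on `(0, 1]` are the indicators of
`(1 - b, 1]` and `(1 - μ, 1]`, so `W_1(B_b, B_μ) = |b - μ|`, minimized only at `μ = b`. A single
sample gives `Ŷ_1 = δ_0 = B_0` with probability `1 - b` and `δ_1 = B_1` with probability `b`, so the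
expected loss is `(1 - b) μ + b (1 - μ) = b + (1 - 2b) μ`, which for `b < 1/2` is minimized at
`μ = 0` instead.
-/

lemma bern_zero : bern 0 = Measure.dirac 0 := by simp [bern]

lemma bern_one : bern 1 = Measure.dirac 1 := by simp [bern]

lemma integral_bern {μ : ℝ} (h0 : 0 ≤ μ) (h1 : μ ≤ 1) (f : ℝ → ℝ) :
    ∫ x, f x ∂bern μ = (1 - μ) * f 0 + μ * f 1 := by
  have hint (a : ℝ) {c : ℝ≥0∞} (hc : c ≠ ∞) : Integrable f (c • Measure.dirac a) :=
    (integrable_dirac enorm_lt_top).smul_measure hc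
  rw [bern, integral_add_measure (hint 0 ENNReal.ofReal_ne_top) (hint 1 ENNReal.ofReal_ne_top),
    integral_smul_measure, integral_smul_measure, integral_dirac, integral_dirac,
    ENNReal.toReal_ofReal (by linarith), ENNReal.toReal_ofReal h0, smul_eq_mul, smul_eq_mul]

lemma cdfFn_bern {μ : ℝ} (h0 : 0 ≤ μ) (h1 : μ ≤ 1) (y : ℝ) :
    cdfFn (bern μ) y = (if 0 ≤ y then 1 - μ else 0) + (if 1 ≤ y then μ else 0) := by
  simp only [cdfFn, bern, Measure.add_apply, Measure.smul_apply, smul_eq_mul,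
    Measure.dirac_apply' _ measurableSet_Iic, indicator, mem_Iic, Pi.one_apply]
  split_ifs <;> simp [ENNReal.toReal_add, h0, h1]

lemma quantileFn_eq_of_forall_le_cdfFn_iff {μ : Measure ℝ} {ω x : ℝ}
    (h : ∀ y, ω ≤ cdfFn μ y ↔ x ≤ y) : quantileFn μ ω = x := by
  rw [quantileFn, show {y | ω ≤ cdfFn μ y} = Ici x from Set.ext h, csInf_Ici]

lemma quantileFn_bern {μ ω : ℝ} (h0 : 0 ≤ μ) (h1 : μ ≤ 1) (hω : ω ∈ Ioc 0 1) :
    quantileFn (bern μ) ω = if ω ≤ 1 - μ then 0 else 1 := by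
  obtain ⟨hω0, hω1⟩ := hω
  split_ifs with h
  all_goals
    refine quantileFn_eq_of_forall_le_cdfFn_iff fun y => ?_
    rw [cdfFn_bern h0 h1]
    split_ifs <;> constructor <;> intro <;> linarith

lemma abs_quantileFn_bern_sub {b μ ω : ℝ} (hb0 : 0 ≤ b) (hb1 : b ≤ 1) (hμ0 : 0 ≤ μ) (hμ1 : μ ≤ 1)
    (hω : ω ∈ Ioc 0 1) :
    |quantileFn (bern b) ω - quantileFn (bern μ) ω| = (uIoc (1 - b) (1 - μ)).indicator 1 ω := by
  rw [quantileFn_bern hb0 hb1 hω, quantileFn_bern hμ0 hμ1 hω]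
  simp only [indicator, uIoc, mem_Ioc, inf_lt_iff, le_sup_iff, Pi.one_apply]
  split_ifs <;> grind

lemma Wp_one_bern_bern {b μ : ℝ} (hb0 : 0 ≤ b) (hb1 : b ≤ 1) (hμ0 : 0 ≤ μ) (hμ1 : μ ≤ 1) :
    Wp 1 (bern b) (bern μ) = |b - μ| := by
  have hsub : uIoc (1 - b) (1 - μ) ⊆ Ioc 0 1 := by
    exact Ioc_subset_Ioc (le_inf (by linarith) (by linarith)) (sup_le (by linarith) (by linarith))
  calc Wp 1 (bern b) (bern μ)
      = ∫ ω in Ioc 0 1, (uIoc (1 - b) (1 - μ)).indicator 1 ω := by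
        rw [Wp, intervalIntegral.integral_of_le zero_le_one]
        simp only [Real.rpow_one, div_one]
        exact setIntegral_congr_fun measurableSet_Ioc
          fun ω hω => abs_quantileFn_bern_sub hb0 hb1 hμ0 hμ1 hω
    _ = volume.real (uIoc (1 - b) (1 - μ)) := by
        rw [integral_indicator_one measurableSet_uIoc, measureReal_restrict_apply measurableSet_uIoc,
          inter_eq_left.mpr hsub]
    _ = |b - μ| := by
        rw [measureReal_def, Real.volume_uIoc, ENNReal.toReal_ofReal (abs_nonneg _),
          sub_sub_sub_cancel_left]

lemma empiricalMeasure_fin_one (Y : Fin 1 → ℝ) : empiricalMeasure Y = Measure.dirac (Y 0) := by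
  simp [empiricalMeasure]

lemma integral_pi_fin_one {ν : Measure ℝ} (g : ℝ → ℝ) :
    ∫ Y : Fin 1 → ℝ, g (Y 0) ∂Measure.pi (fun _ => ν) = ∫ x, g x ∂ν :=
  (measurePreserving_funUnique ν (Fin 1)).integral_comp' g

lemma integral_Wp_one_empiricalMeasure_fin_one {b μ : ℝ} (hb0 : 0 ≤ b) (hb1 : b ≤ 1)
    (hμ0 : 0 ≤ μ) (hμ1 : μ ≤ 1) :
    ∫ Y, Wp 1 (empiricalMeasure Y) (bern μ) ∂Measure.pi (fun _ : Fin 1 => bern b)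
      = (1 - b) * μ + b * (1 - μ) := by
  simp only [empiricalMeasure_fin_one]
  rw [integral_pi_fin_one (fun x => Wp 1 (Measure.dirac x) (bern μ)), integral_bern hb0 hb1,
    ← bern_zero, ← bern_one, Wp_one_bern_bern le_rfl zero_le_one hμ0 hμ1,
    Wp_one_bern_bern zero_le_one le_rfl hμ0 hμ1, zero_sub, abs_neg, abs_of_nonneg hμ0,
    abs_of_nonneg (sub_nonneg.mpr hμ1)]

lemma minimizers_Wp_one_bern {b : ℝ} (hb0 : 0 ≤ b) (hb1 : b ≤ 1) :
    {μ : ℝ | μ ∈ Icc 0 1 ∧ ∀ ν ∈ Icc 0 1, Wp 1 (bern b) (bern μ) ≤ Wp 1 (bern b) (bern ν)} = {b} := by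
  ext μ
  simp only [mem_ofPred_eq, mem_singleton_iff]
  constructor
  · rintro ⟨⟨hμ0, hμ1⟩, hmin⟩
    have := hmin b ⟨hb0, hb1⟩
    rw [Wp_one_bern_bern hb0 hb1 hμ0 hμ1, Wp_one_bern_bern hb0 hb1 hb0 hb1, sub_self, abs_zero,
      abs_nonpos_iff, sub_eq_zero] at this
    exact this.symm
  · rintro rfl
    refine ⟨⟨hb0, hb1⟩, fun ν ⟨hν0, hν1⟩ => ?_⟩
    rw [Wp_one_bern_bern hb0 hb1 hb0 hb1, Wp_one_bern_bern hb0 hb1 hν0 hν1, sub_self, abs_zero]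
    exact abs_nonneg _

/-- there are `p ∈ [1, ∞)`, `m ≥ 1` and `b ∈ (0,1)` such that the minimizers over
`μ ∈ [0,1]` of the expected empirical Wasserstein loss `μ ↦ E[W_p(Ŷ_m, B_μ)]` (samples drawn
i.i.d. from `B = B_b`) differ from the minimizers of the true loss `μ ↦ W_p(B, B_μ)`, the latter
being `{b}`. -/
theorem bernoulli_biased_wasserstein :
    ∃ (p : ℝ) (m : ℕ) (b : ℝ), 1 ≤ p ∧ 1 ≤ m ∧ b ∈ Set.Ioo (0 : ℝ) 1 ∧
      {μ : ℝ | μ ∈ Set.Icc (0:ℝ) 1 ∧ ∀ ν ∈ Set.Icc (0:ℝ) 1,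
          (∫ Y, Wp p (empiricalMeasure Y) (bern μ) ∂(Measure.pi fun _ : Fin m => bern b))
            ≤ ∫ Y, Wp p (empiricalMeasure Y) (bern ν) ∂(Measure.pi fun _ : Fin m => bern b)} ≠
      {μ : ℝ | μ ∈ Set.Icc (0:ℝ) 1 ∧ ∀ ν ∈ Set.Icc (0:ℝ) 1,
          Wp p (bern b) (bern μ) ≤ Wp p (bern b) (bern ν)} ∧
      {μ : ℝ | μ ∈ Set.Icc (0:ℝ) 1 ∧ ∀ ν ∈ Set.Icc (0:ℝ) 1,
          Wp p (bern b) (bern μ) ≤ Wp p (bern b) (bern ν)} = {b} := by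
  refine ⟨1, 1, 1 / 4, le_rfl, le_rfl, by norm_num, ?_⟩
  have hb0 : (0 : ℝ) ≤ 1 / 4 := by norm_num
  have hb1 : (1 / 4 : ℝ) ≤ 1 := by norm_num
  rw [minimizers_Wp_one_bern hb0 hb1]
  refine ⟨fun h => ?_, rfl⟩
  -- The expected loss `1/4 + μ/2` is minimized at `μ = 0`, not at `b = 1/4`.
  have hzero := (Set.ext_iff.mp h 0).mp ⟨⟨le_rfl, zero_le_one⟩, fun ν ⟨hν0, hν1⟩ => by
    rw [integral_Wp_one_empiricalMeasure_fin_one hb0 hb1 le_rfl zero_le_one,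
      integral_Wp_one_empiricalMeasure_fin_one hb0 hb1 hν0 hν1]
    linarith⟩
  norm_num at hzero
end
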